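/- Color the edges of K_n with colors 1,…,t giving subgraphs H_1,…,H_t with H_j regular for all j ≥ 3. Let v x_0 ∈ E(H_1) and x_0 u ∉ E(H_1). Define a near exchange of length l as a list of 2l distinct edges (v x_0, x_0 u, v x_1, x_1 u, …, v x_{l−1}, x_{l−1} u) with x_i u and v x_{i+1} the same color for 0 ≤ i ≤ l−2, and x_j u not the same color as v x_0 for all j ≤ l−1. If v x_0 and x_0 u admit no exchange (a near exchange closing up: x_{l−1} u colored the same as v x_0, wrapping modulo l), then any longest near exchange starting (v x_0, x_0 u, …) ends with an edge x_{l−1} u belonging to H_2. -/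

import Mathlib

open SimpleGraph

attribute [local instance] Classical.propDecidable

/-- The spanning subgraph of `K_n` consisting of the edges with color `j`
under the edge coloring `c`. -/
def Hc {n : ℕ} (c : Sym2 (Fin n) → ℕ) (j : ℕ) : SimpleGraph (Fin n) where
  Adj x y := x ≠ y ∧ c s(x, y) = j
  symm := ⟨by
    rintro x y ⟨h1, h2⟩
    exact ⟨h1.symm, by rwa [Sym2.eq_swap]⟩⟩
  loopless := ⟨by rintro x ⟨h, -⟩; exact h rfl⟩

/-- An exchange for the edges `v x₀` and `x₀ u` (with `x₀ = x 0`): a cyclic list of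
`2l` distinct edges `(v x₀, x₀ u, v x₁, x₁ u, …, v x_{l-1}, x_{l-1} u)` such that
`x_i u` and `v x_{i+1}` have the same color for all `i` modulo `l`. -/
def IsExchange {n : ℕ} (c : Sym2 (Fin n) → ℕ) (v u : Fin n) (l : ℕ)
    (x : ℕ → Fin n) : Prop :=
  0 < l ∧ (∀ i, i < l → x i ≠ u ∧ x i ≠ v) ∧
    (∀ i j, i < l → j < l → x i = x j → i = j) ∧
    (∀ i, i < l → c s(x i, u) = c s(v, x ((i + 1) % l)))

/-- The set `X(L) = {x₀, …, x_{l-1}}` of an exchange (or near exchange). -/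
def ExchX {n : ℕ} (l : ℕ) (x : ℕ → Fin n) : Set (Fin n) := {y | ∃ i < l, x i = y}

/-- An exchange is simplified if for each color class at most one `x_j` has
`v x_j` of that color. -/
def Simplified {n : ℕ} (c : Sym2 (Fin n) → ℕ) (v : Fin n) (l : ℕ)
    (x : ℕ → Fin n) : Prop :=
  ∀ i j, i < l → j < l → c s(v, x i) = c s(v, x j) → i = j


/-- A near exchange of length `l`: a list of `2l` distinct edges
`(v x₀, x₀ u, …, v x_{l-1}, x_{l-1} u)` with `x_i u` and `v x_{i+1}` of equal
color for `0 ≤ i ≤ l - 2`, and `x_j u` never colored like `v x₀`. -/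
def IsNearExchange {n : ℕ} (c : Sym2 (Fin n) → ℕ) (v u : Fin n) (l : ℕ)
    (x : ℕ → Fin n) : Prop :=
  0 < l ∧ (∀ i, i < l → x i ≠ u ∧ x i ≠ v) ∧
    (∀ i j, i < l → j < l → x i = x j → i = j) ∧
    (∀ i, i + 1 < l → c s(x i, u) = c s(v, x (i + 1))) ∧
    (∀ j, j < l → c s(x j, u) ≠ c s(v, x 0))

/-!
Let `k` be the color of the last edge `x_{l-1} u`. It is not the color 1 of `v x₀`.
If `k ≥ 3`, then `H_k` is `r`-regular. By maximality, every `H_k`-neighbour of `v` other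
than `u` is some `x_i`, since otherwise the near exchange could be extended (to an
exchange if the new edge to `u` has color 1, and to a longer near exchange if not).
Each `x_i` with `v x_i ∈ H_k` gives, via the chain condition, an `x_{i-1}` with
`x_{i-1} u ∈ H_k`, and `x_{l-1}` is one more; so `u` has more `H_k`-neighbours among
the `x_i` than `v` has, contradicting regularity. Hence `k = 2`.
-/

open Finset Function

theorem card_filter_range_lt_of_shift {p q : ℕ → Prop} [DecidablePred p] [DecidablePred q]
    {l : ℕ} (hl : 0 < l) (hp0 : ¬ p 0) (hpq : ∀ i, i + 1 < l → p (i + 1) → q i)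
    (hq : q (l - 1)) : #((range l).filter p) < #((range l).filter q) := by
  obtain ⟨m, rfl⟩ : ∃ m, l = m + 1 := ⟨l - 1, by omega⟩
  calc #((range (m + 1)).filter p) ≤ #((range m).filter q) := by
        refine card_le_card_of_injOn (· - 1) (fun i hi => ?_) (fun i hi j hj hij => ?_)
        · simp only [coe_filter, mem_range, Set.mem_ofPred_eq] at hi ⊢
          obtain ⟨i, rfl⟩ : ∃ i', i = i' + 1 := ⟨i - 1, by grind⟩
          exact ⟨by omega, hpq i (by omega) hi.2⟩
        · simp only [coe_filter, mem_range, Set.mem_ofPred_eq] at hi hj hij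
          have : i ≠ 0 := fun h => hp0 (h ▸ hi.2)
          have : j ≠ 0 := fun h => hp0 (h ▸ hj.2)
          omega
    _ < #((range (m + 1)).filter q) := by
        rw [range_add_one, filter_insert, if_pos (by simpa using hq),
          card_insert_of_notMem (by simp)]
        omega

theorem SimpleGraph.IsRegularOfDegree.card_neighborFinset_erase_comm {V : Type*} [Fintype V]
    [DecidableEq V] {G : SimpleGraph V} [DecidableRel G.Adj] {r : ℕ}
    (hG : G.IsRegularOfDegree r) (v u : V) :
    #((G.neighborFinset v).erase u) = #((G.neighborFinset u).erase v) := by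
  by_cases h : G.Adj v u
  · rw [card_erase_of_mem (by simpa using h), card_erase_of_mem (by simpa using h.symm),
      card_neighborFinset_eq_degree, card_neighborFinset_eq_degree, hG v, hG u]
  · rw [erase_eq_of_notMem (by simpa using h),
      erase_eq_of_notMem (by simpa using fun h' => h h'.symm),
      card_neighborFinset_eq_degree, card_neighborFinset_eq_degree, hG v, hG u]

namespace IsNearExchange

variable {n : ℕ} {c : Sym2 (Fin n) → ℕ} {v u w : Fin n} {l : ℕ} {x : ℕ → Fin n}

theorem color_last_ne (h : IsNearExchange c v u l x) : c s(x (l - 1), u) ≠ c s(v, x 0) :=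
  h.2.2.2.2 _ (by have := h.1; omega)

theorem update_ne (h : IsNearExchange c v u l x) (hwu : w ≠ u) (hwv : w ≠ v) :
    ∀ i, i < l + 1 → update x l w i ≠ u ∧ update x l w i ≠ v := by
  intro i hi
  rcases Nat.lt_succ_iff_lt_or_eq.1 hi with hi | rfl
  · rw [update_of_ne hi.ne]; exact h.2.1 i hi
  · rw [update_self]; exact ⟨hwu, hwv⟩

theorem update_injective (h : IsNearExchange c v u l x) (hwX : w ∉ ExchX l x) :
    ∀ i j, i < l + 1 → j < l + 1 → update x l w i = update x l w j → i = j := by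
  have hlast : ∀ i, i < l → update x l w i ≠ update x l w l := by
    intro i hi hxi
    rw [update_of_ne hi.ne _ _, update_self] at hxi
    exact hwX ⟨i, hi, hxi⟩
  intro i j hi hj hij
  rcases Nat.lt_succ_iff_lt_or_eq.1 hi with hi | rfl <;>
    rcases Nat.lt_succ_iff_lt_or_eq.1 hj with hj | rfl
  · rw [update_of_ne hi.ne _ _, update_of_ne hj.ne] at hij
    exact h.2.2.1 i j hi hj hij
  · exact absurd hij (hlast i hi)
  · exact absurd hij.symm (hlast j hj)
  · rfl

theorem update_chain (h : IsNearExchange c v u l x) (hvw : c s(v, w) = c s(x (l - 1), u)) :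
    ∀ i, i + 1 < l + 1 →
      c s(update x l w i, u) = c s(v, update x l w (i + 1)) := by
  intro i hi
  rw [update_of_ne (by omega) _ _]
  rcases Nat.lt_succ_iff_lt_or_eq.1 hi with hi | hil
  · rw [update_of_ne hi.ne]; exact h.2.2.2.1 i hi
  · rw [hil, update_self, hvw, ← hil, Nat.add_sub_cancel]

theorem isExchange_update (h : IsNearExchange c v u l x) (hwX : w ∉ ExchX l x) (hwu : w ≠ u)
    (hwv : w ≠ v) (hvw : c s(v, w) = c s(x (l - 1), u)) (hwu0 : c s(w, u) = c s(v, x 0)) :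
    IsExchange c v u (l + 1) (update x l w) := by
  refine ⟨l.succ_pos, h.update_ne hwu hwv, h.update_injective hwX, fun i hi => ?_⟩
  rcases Nat.lt_succ_iff_lt_or_eq.1 hi with hi | rfl
  · rw [Nat.mod_eq_of_lt (by omega)]
    exact h.update_chain hvw i (by omega)
  · rw [Nat.mod_self, update_self, update_of_ne h.1.ne _ _, hwu0]

theorem isNearExchange_update (h : IsNearExchange c v u l x) (hwX : w ∉ ExchX l x) (hwu : w ≠ u)
    (hwv : w ≠ v) (hvw : c s(v, w) = c s(x (l - 1), u)) (hwu0 : c s(w, u) ≠ c s(v, x 0)) :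
    IsNearExchange c v u (l + 1) (update x l w) := by
  refine ⟨l.succ_pos, h.update_ne hwu hwv, h.update_injective hwX, h.update_chain hvw,
    fun j hj => ?_⟩
  rw [update_of_ne h.1.ne _ _]
  rcases Nat.lt_succ_iff_lt_or_eq.1 hj with hj | rfl
  · rw [update_of_ne hj.ne]; exact h.2.2.2.2 j hj
  · rwa [update_self]

theorem mem_of_adj_color_last (h : IsNearExchange c v u l x)
    (hno : ¬ ∃ (l' : ℕ) (x' : ℕ → Fin n), IsExchange c v u l' x' ∧ x' 0 = x 0)
    (hmax : ∀ (l' : ℕ) (x' : ℕ → Fin n),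
      IsNearExchange c v u l' x' → x' 0 = x 0 → l' ≤ l)
    (hw : (Hc c (c s(x (l - 1), u))).Adj v w) : w = u ∨ w ∈ ExchX l x := by
  by_contra! ⟨hwu, hwX⟩
  have hx0 : update x l w 0 = x 0 := update_of_ne h.1.ne _ _
  by_cases hwu0 : c s(w, u) = c s(v, x 0)
  · exact hno ⟨_, _, h.isExchange_update hwX hwu hw.1.symm hw.2 hwu0, hx0⟩
  · have := hmax _ _ (h.isNearExchange_update hwX hwu hw.1.symm hw.2 hwu0) hx0
    omega

theorem not_isRegularOfDegree_color_last (h : IsNearExchange c v u l x)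
    (hno : ¬ ∃ (l' : ℕ) (x' : ℕ → Fin n), IsExchange c v u l' x' ∧ x' 0 = x 0)
    (hmax : ∀ (l' : ℕ) (x' : ℕ → Fin n),
      IsNearExchange c v u l' x' → x' 0 = x 0 → l' ≤ l)
    (r : ℕ) : ¬ (Hc c (c s(x (l - 1), u))).IsRegularOfDegree r := by
  intro hr
  set k := c s(x (l - 1), u)
  set A := (range l).filter (fun i => c s(v, x i) = k)
  set B := (range l).filter (fun i => c s(x i, u) = k)
  have hAB : #A < #B := card_filter_range_lt_of_shift h.1 (fun h0 => h.color_last_ne h0.symm)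
    (fun i hi hp => (h.2.2.2.1 i hi).trans hp) rfl
  have hvA : ((Hc c k).neighborFinset v).erase u ⊆ A.image x := by
    intro w hw
    obtain ⟨hwu, hvw⟩ := mem_erase.1 hw
    rw [mem_neighborFinset] at hvw
    obtain ⟨i, hi, rfl⟩ := (h.mem_of_adj_color_last hno hmax hvw).resolve_left hwu
    exact mem_image_of_mem x (mem_filter.2 ⟨mem_range.2 hi, hvw.2⟩)
  have hBu : B.image x ⊆ ((Hc c k).neighborFinset u).erase v := by
    intro w hw
    obtain ⟨i, hi, rfl⟩ := mem_image.1 hw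
    obtain ⟨hi, hiu⟩ := mem_filter.1 hi
    have hi := mem_range.1 hi
    obtain ⟨hiu_ne, hiv_ne⟩ := h.2.1 i hi
    refine mem_erase.2 ⟨hiv_ne, (mem_neighborFinset _ _ _).2 ⟨hiu_ne.symm, ?_⟩⟩
    rwa [Sym2.eq_swap]
  have hBinj : Set.InjOn x B := fun i hi j hj hij =>
    h.2.2.1 i j (mem_range.1 (mem_filter.1 hi).1) (mem_range.1 (mem_filter.1 hj).1) hij
  refine hAB.not_ge ?_
  calc #B = #(B.image x) := (card_image_of_injOn hBinj).symm
    _ ≤ #(((Hc c k).neighborFinset u).erase v) := card_le_card hBu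
    _ = #(((Hc c k).neighborFinset v).erase u) := (hr.card_neighborFinset_erase_comm v u).symm
    _ ≤ #(A.image x) := card_le_card hvA
    _ ≤ #A := card_image_le

end IsNearExchange

theorem longest_near_exchange_ends_in_H2_general
    (n t : ℕ) (c : Sym2 (Fin n) → ℕ)
    (hcol : ∀ e : Sym2 (Fin n), ¬ e.IsDiag → 1 ≤ c e ∧ c e ≤ t)
    (hreg : ∀ j, 3 ≤ j → j ≤ t → ∃ r, (Hc c j).IsRegularOfDegree r)
    (u v x0 : Fin n)
    (h1 : (Hc c 1).Adj v x0)
    -- `v x₀` and `x₀ u` cannot be exchanged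
    (hno : ¬ ∃ (l : ℕ) (x : ℕ → Fin n), IsExchange c v u l x ∧ x 0 = x0)
    (l : ℕ) (x : ℕ → Fin n)
    (hnear : IsNearExchange c v u l x) (h0 : x 0 = x0)
    -- the near exchange is a longest one starting with `(v x₀, x₀ u)`
    (hmax : ∀ (l' : ℕ) (x' : ℕ → Fin n),
      IsNearExchange c v u l' x' → x' 0 = x0 → l' ≤ l) :
    c s(x (l - 1), u) = 2 := by
  subst h0
  have hl : 0 < l := hnear.1
  obtain ⟨hk1, hkt⟩ := hcol s(x (l - 1), u) (by simpa using (hnear.2.1 (l - 1) (by omega)).1)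
  have hk_ne_one : c s(x (l - 1), u) ≠ 1 := h1.2 ▸ hnear.color_last_ne
  have hk_lt_three : ¬ 3 ≤ c s(x (l - 1), u) := fun hk3 =>
    let ⟨r, hr⟩ := hreg _ hk3 hkt
    hnear.not_isRegularOfDegree_color_last hno hmax r hr
  omega

theorem longest_near_exchange_ends_in_H2
    (n t : ℕ) (c : Sym2 (Fin n) → ℕ)
    (hcol : ∀ e : Sym2 (Fin n), ¬ e.IsDiag → 1 ≤ c e ∧ c e ≤ t)
    (hreg : ∀ j, 3 ≤ j → j ≤ t → ∃ r, (Hc c j).IsRegularOfDegree r)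
    (u v x0 : Fin n)
    (h1 : (Hc c 1).Adj v x0)
    (h2 : ¬ (Hc c 1).Adj x0 u) (hx0u : x0 ≠ u)
    -- `v x₀` and `x₀ u` cannot be exchanged
    (hno : ¬ ∃ (l : ℕ) (x : ℕ → Fin n), IsExchange c v u l x ∧ x 0 = x0)
    (l : ℕ) (x : ℕ → Fin n)
    (hnear : IsNearExchange c v u l x) (h0 : x 0 = x0)
    -- the near exchange is a longest one starting with `(v x₀, x₀ u)`
    (hmax : ∀ (l' : ℕ) (x' : ℕ → Fin n),
      IsNearExchange c v u l' x' → x' 0 = x0 → l' ≤ l) :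
    c s(x (l - 1), u) = 2 :=
  longest_near_exchange_ends_in_H2_general n t c hcol hreg u v x0 h1 hno l x hnear h0 hmax
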